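/- Let G be the time-invariant dynamic Bayesian network DAG of the environment. If the latent component g_{i,t} has no directed path in G to any future reward node r_{t+k} (k > 0), then the set g_t^min ∪ {a_t} d-separates g_{i,t} from every future reward node r_{t+k} (k > 0) in G, where g_{i,t} ∈ g_t^min if and only if c_i^{g→r} = 1 or g_{i,t} has a directed path in G to a future reward r_{t+k} (for some k > 0) passing through other latent state components. -/

import Mathlib

open Relation

/-- Nodes of the time-invariant dynamic Bayesian network: latent state
components `g_{i,t}`, actions `a_t`, and rewards `r_t`. -/
inductive DBNNode (d : ℕ) : Type where
  | latent (i : Fin d) (t : ℕ)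
  | action (t : ℕ)
  | reward (t : ℕ)
deriving DecidableEq

/-- The fixed binary structural masks of the DBN.  `cgg i j = true` encodes the
edge `g_{j,t-1} → g_{i,t}`, `cag i` the edge `a_{t-1} → g_{i,t}`, `cgr i` the
edge `g_{i,t-1} → r_t`, and `car` the edge `a_{t-1} → r_t`. -/
structure DBNMasks (d : ℕ) where
  cgg : Fin d → Fin d → Bool
  cag : Fin d → Bool
  cgr : Fin d → Bool
  car : Bool

/-- The directed edges of the time-invariant DBN graph `G`. -/
def DBNEdge {d : ℕ} (c : DBNMasks d) : DBNNode d → DBNNode d → Prop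
  | .latent j t, .latent i t' => t' = t + 1 ∧ c.cgg i j = true
  | .action t, .latent i t' => t' = t + 1 ∧ c.cag i = true
  | .latent i t, .reward t' => t' = t + 1 ∧ c.cgr i = true
  | .action t, .reward t' => t' = t + 1 ∧ c.car = true
  | _, _ => False

/-- Undirected adjacency induced by a directed edge relation. -/
def Adj {V : Type*} (E : V → V → Prop) (x y : V) : Prop := E x y ∨ E y x

/-- `p` is a (simple, undirected) path in the graph with edge relation `E`:
consecutive nodes are adjacent and no node repeats. -/
def IsPathList {V : Type*} (E : V → V → Prop) (p : List V) : Prop :=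
  p.Chain' (Adj E) ∧ p.Nodup

/-- A path `p` is blocked by the conditioning set `Z`: it contains a
chain `u → m → v` (in either direction) or a fork `u ← m → v` with middle
node `m ∈ Z`, or a collider `u → m ← v` with `m ∉ Z` and no descendant of
`m` in `Z`. -/
def BlockedBy {V : Type*} (E : V → V → Prop) (Z : Set V) (p : List V) : Prop :=
  ∃ u m v : V, [u, m, v] <:+: p ∧
    ((((E u m ∧ E m v) ∨ (E v m ∧ E m u) ∨ (E m u ∧ E m v)) ∧ m ∈ Z) ∨
      ((E u m ∧ E v m) ∧ m ∉ Z ∧ ∀ w : V, Relation.TransGen E m w → w ∉ Z))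

/-- `Z` d-separates `X` from `Y` in the graph with edge relation `E`: every
path between a node of `X` and a node of `Y` is blocked by `Z`. -/
def DSep {V : Type*} (E : V → V → Prop) (X Y Z : Set V) : Prop :=
  ∀ x ∈ X, ∀ y ∈ Y, ∀ p : List V,
    IsPathList E p → p.head? = some x → p.getLast? = some y → BlockedBy E Z p

/-- The joint distribution (represented abstractly by its ternary conditional
independence relation `CI X Y Z`, "X ⫫ Y given Z") satisfies the global Markov
condition w.r.t. the graph: d-separation implies conditional independence. -/
def GlobalMarkov {V : Type*} (E : V → V → Prop)
    (CI : Set V → Set V → Set V → Prop) : Prop :=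
  ∀ X Y Z : Set V, Disjoint X Y → Disjoint X Z → Disjoint Y Z →
    DSep E X Y Z → CI X Y Z

/-- The joint distribution is faithful to the graph: every conditional
independence corresponds to a d-separation. -/
def FaithfulTo {V : Type*} (E : V → V → Prop)
    (CI : Set V → Set V → Set V → Prop) : Prop :=
  ∀ X Y Z : Set V, Disjoint X Y → Disjoint X Z → Disjoint Y Z →
    CI X Y Z → DSep E X Y Z

/-- `g_{i,t} ∈ g_t^min` iff `c_i^{g→r} = 1` or `g_{i,t}` has a directed path in
`G` to a future reward `r_{t+k}` (some `k > 0`) passing through other latent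
state components. -/
def InMinSet {d : ℕ} (c : DBNMasks d) (i : Fin d) (t : ℕ) : Prop :=
  c.cgr i = true ∨
    ∃ k : ℕ, 0 < k ∧ ∃ (j : Fin d) (s : ℕ),
      Relation.TransGen (DBNEdge c) (DBNNode.latent i t) (DBNNode.latent j s) ∧
      Relation.TransGen (DBNEdge c) (DBNNode.latent j s) (DBNNode.reward (t + k))

/-- The minimal latent state set `g_t^min`, as a set of nodes of `G`. -/
def MinSet {d : ℕ} (c : DBNMasks d) (t : ℕ) : Set (DBNNode d) :=
  {n | ∃ i : Fin d, n = DBNNode.latent i t ∧ InMinSet c i t}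

/-! Every edge of `G` raises the time index by one, and the conditioning set lies at time `t`.
On a path from `g_{i,t}` to `r_{t+k}`, let `w` be the last node at time `≤ t`; it is at time `t`
exactly and the path leaves it along a forward edge. If the path is directed from `w` on, then `w`
has a directed path to `r_{t+k}`, so it lies in `g_t^min ∪ {a_t}`; it is not `g_{i,t}` itself, so
it is the middle of a chain or a fork. Otherwise the first backward edge after `w` creates a
collider strictly after time `t`, whose descendants are all later than `t` and so outside the
conditioning set. -/

section Paths

variable {V : Type*} {E : V → V → Prop}

theorem blockedBy_of_mem_of_edge {Z : Set V} {p : List V} {u m v : V} (h : [u, m, v] <:+: p)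
    (hum : Adj E u m) (hmv : E m v) (hm : m ∈ Z) : BlockedBy E Z p :=
  ⟨u, m, v, h, Or.inl ⟨hum.elim (fun hum => Or.inl ⟨hum, hmv⟩)
    (fun hmu => Or.inr (Or.inr ⟨hmu, hmv⟩)), hm⟩⟩

theorem transGen_or_exists_collider :
    ∀ {x a : V} {l : List V} {y : V}, (a :: l).IsChain (Adj E) → E x a →
      (a :: l).getLast? = some y →
      TransGen E x y ∨ ∃ u m v, [u, m, v] <:+: x :: a :: l ∧ m ∈ a :: l ∧ E u m ∧ E v m
  | _, _, [], _, _, hxa, hlast => by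
    rw [List.getLast?_singleton, Option.some.injEq] at hlast
    exact Or.inl (hlast ▸ .single hxa)
  | x, a, b :: l, _, hchain, hxa, hlast => by
    obtain ⟨hab | hba, hchain⟩ := List.isChain_cons_cons.mp hchain
    · rw [List.getLast?_cons_cons] at hlast
      rcases transGen_or_exists_collider hchain hab hlast with
        hay | ⟨u, m, v, hinf, hm, hum, hvm⟩
      · exact Or.inl (.head hxa hay)
      · exact Or.inr ⟨u, m, v, List.infix_cons hinf, List.mem_cons_of_mem a hm, hum, hvm⟩
    · exact Or.inr
        ⟨x, a, b, (List.prefix_append [x, a, b] l).isInfix, List.mem_cons_self, hxa, hba⟩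

variable {τ : V → ℕ}

theorem lt_of_transGen_of_graded (hτ : ∀ x y, E x y → τ y = τ x + 1) {x y : V}
    (h : TransGen E x y) : τ x < τ y := by
  induction h with
  | single hxy => simp [hτ _ _ hxy]
  | tail _ hyz ih => have := hτ _ _ hyz; omega

theorem exists_split_at_level (hτ : ∀ x y, E x y → τ y = τ x + 1) (t : ℕ) :
    ∀ {l : List V} {y : V}, l.IsChain (Adj E) → l.getLast? = some y → t < τ y →
      (∃ x ∈ l, τ x ≤ t) →
      ∃ pre w a post,
        l = pre ++ w :: a :: post ∧ τ w = t ∧ E w a ∧ ∀ z ∈ a :: post, t < τ z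
  | [], _, _, hlast, _, _ => by simp at hlast
  | x :: l, y, hchain, hlast, hy, ⟨z, hz, hzt⟩ => by
    by_cases hlow : ∃ z ∈ l, τ z ≤ t
    · obtain ⟨b, l, rfl⟩ : ∃ b l', l = b :: l' := by
        refine List.exists_cons_of_ne_nil ?_
        rintro rfl
        simp at hlow
      rw [List.getLast?_cons_cons] at hlast
      obtain ⟨pre, w, a, post, hsplit, hw, hwa, habove⟩ :=
        exists_split_at_level hτ t (List.isChain_cons_cons.mp hchain).2 hlast hy hlow
      exact ⟨x :: pre, w, a, post, by rw [hsplit, List.cons_append], hw, hwa, habove⟩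
    · push Not at hlow
      have hxt : τ x ≤ t := by
        rcases List.mem_cons.mp hz with rfl | hz
        · exact hzt
        · exact absurd hzt (hlow z hz).not_ge
      obtain ⟨a, post, rfl⟩ : ∃ a post, l = a :: post := by
        refine List.exists_cons_of_ne_nil ?_
        rintro rfl
        obtain rfl : x = y := by simpa using hlast
        omega
      have hat := hlow a List.mem_cons_self
      have hxa : E x a := by
        rcases (List.isChain_cons_cons.mp hchain).1 with hxa | hax
        · exact hxa
        · have := hτ _ _ hax; omega
      exact ⟨[], x, a, post, rfl, by have := hτ _ _ hxa; omega, hxa, hlow⟩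

theorem blockedBy_of_collider_above_level (hτ : ∀ x y, E x y → τ y = τ x + 1) {Z : Set V}
    {t : ℕ} (hZ : ∀ z ∈ Z, τ z ≤ t) {p : List V} {u m v : V} (h : [u, m, v] <:+: p)
    (hum : E u m) (hvm : E v m) (hm : t < τ m) : BlockedBy E Z p := by
  refine ⟨u, m, v, h, Or.inr ⟨⟨hum, hvm⟩, fun hmZ => ?_, fun w hmw hwZ => ?_⟩⟩
  · have := hZ m hmZ
    omega
  · have := hZ w hwZ
    have := lt_of_transGen_of_graded hτ hmw
    omega

end Paths

def DBNNode.time {d : ℕ} : DBNNode d → ℕ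
  | .latent _ t | .action t | .reward t => t

section DBN

variable {d : ℕ} {c : DBNMasks d}

theorem DBNEdge.time_eq {x y : DBNNode d} (h : DBNEdge c x y) : y.time = x.time + 1 := by
  cases x <;> cases y <;> simp_all [DBNEdge, DBNNode.time]

theorem not_transGen_dbnEdge_reward {s : ℕ} {y : DBNNode d} :
    ¬ TransGen (DBNEdge c) (.reward s) y := by
  intro h
  obtain ⟨b, hb, -⟩ := TransGen.head'_iff.mp h
  cases b <;> simp [DBNEdge] at hb

theorem inMinSet_of_transGen_reward {j : Fin d} {t k : ℕ} (hk : 0 < k)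
    (h : TransGen (DBNEdge c) (.latent j t) (.reward (t + k))) : InMinSet c j t := by
  obtain ⟨b, hb, hbr⟩ := TransGen.head'_iff.mp h
  rcases reflTransGen_iff_eq_or_transGen.mp hbr with rfl | hbr
  · exact Or.inl hb.2
  · cases b with
    | latent j' s => exact Or.inr ⟨k, hk, j', s, .single hb, hbr⟩
    | action s => simp [DBNEdge] at hb
    | reward s => exact absurd hbr not_transGen_dbnEdge_reward

theorem mem_minSet_union_action_of_transGen_reward {t k : ℕ} (hk : 0 < k) {n : DBNNode d}
    (hn : n.time = t) (h : TransGen (DBNEdge c) n (.reward (t + k))) :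
    n ∈ MinSet c t ∪ {.action t} := by
  subst hn
  cases n with
  | latent j s => exact Or.inl ⟨j, rfl, inMinSet_of_transGen_reward hk h⟩
  | action s => exact Or.inr rfl
  | reward s => exact absurd h not_transGen_dbnEdge_reward

theorem time_eq_of_mem_minSet_union_action {t : ℕ} {n : DBNNode d}
    (h : n ∈ MinSet c t ∪ {.action t}) : n.time = t := by
  rcases h with ⟨j, rfl, -⟩ | rfl <;> rfl

end DBN

/-- If the latent component `g_{i,t}` has no directed path in `G` to any future
reward node `r_{t+k}` (`k > 0`), then `g_t^min ∪ {a_t}` d-separates `g_{i,t}`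
from every future reward node `r_{t+k}` in `G`. -/
theorem dsep_of_no_directed_path_to_future_reward (d : ℕ) (c : DBNMasks d)
    (i : Fin d) (t : ℕ)
    (hNoPath : ∀ k : ℕ, 0 < k →
      ¬ Relation.TransGen (DBNEdge c) (DBNNode.latent i t) (DBNNode.reward (t + k))) :
    ∀ k : ℕ, 0 < k →
      DSep (DBNEdge c) {DBNNode.latent i t} {DBNNode.reward (t + k)}
        (MinSet c t ∪ {DBNNode.action t}) := by
  rintro k hk x hx y hy p ⟨hchain, -⟩ hhead hlast
  rw [Set.mem_singleton_iff] at hx hy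
  subst hx hy
  have hgraded : ∀ x y, DBNEdge c x y → y.time = x.time + 1 := fun _ _ => DBNEdge.time_eq
  obtain ⟨pre, w, a, post, rfl, hw, hwa, habove⟩ :=
    exists_split_at_level hgraded t hchain hlast (by simp [DBNNode.time]; omega)
      ⟨_, List.mem_of_mem_head? hhead, le_rfl⟩
  have hsuffix : a :: post <:+ pre ++ w :: a :: post :=
    List.suffix_cons w _ |>.trans (List.suffix_append pre _)
  rcases transGen_or_exists_collider (hchain.suffix hsuffix) hwa
      (by simpa [List.getLast?_append] using hlast) with hpath | ⟨u, m, v, hinf, hm, hum, hvm⟩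
  · have hwZ := mem_minSet_union_action_of_transGen_reward hk hw hpath
    rcases List.eq_nil_or_concat' pre with rfl | ⟨pre, u, rfl⟩
    · obtain rfl : w = .latent i t := by simpa using hhead
      exact absurd hpath (hNoPath k hk)
    · have hinf : [u, w, a] <:+: pre ++ [u] ++ w :: a :: post := ⟨pre, post, by simp⟩
      have huw : Adj (DBNEdge c) u w :=
        List.isChain_pair.mp (hchain.infix ⟨pre, a :: post, by simp⟩)
      exact blockedBy_of_mem_of_edge hinf huw hwa hwZ
  · exact blockedBy_of_collider_above_level hgraded
      (fun z hz => (time_eq_of_mem_minSet_union_action hz).le)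
      (hinf.trans (List.suffix_append pre _).isInfix) hum hvm (habove m hm)
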